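/- arXiv:1607.00950 — 6 statements merged into one kernel-verified Lean document; each statement's English description precedes it below -/
import Mathlib

section
/- Let a ≥ 5 be an integer and N = (a-1)^2. Then v_2(a,N)^2 = 1 + (a-2)^2, where v_2(a,N)^2 is the minimum of m_1^2 + m_2^2 over nonzero integer pairs (m_1, m_2) with m_1 + a·m_2 ≡ 0 (mod N). -/
lemma aux_stmt3 (a : ℤ) (ha : 5 ≤ a) (m₁ m₂ : ℤ) (hne : (m₁, m₂) ≠ (0, 0))
    (hdvd : (a - 1) ^ 2 ∣ m₁ + a * m₂) : 1 + (a - 2) ^ 2 ≤ m₁ ^ 2 + m₂ ^ 2 := by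
  by_contra h
  push_neg at h
  set b := a - 1 with hb
  have hb4 : 4 ≤ b := by omega
  have hbpos : (0 : ℤ) < b := by omega
  have hne' : m₁ ≠ 0 ∨ m₂ ≠ 0 := by
    by_contra hc
    push_neg at hc
    exact hne (by rw [hc.1, hc.2])
  have hm : m₁ ^ 2 + m₂ ^ 2 ≤ (b - 1) ^ 2 := by
    have : (a - 2 : ℤ) = b - 1 := by omega
    nlinarith [h]
  have hm1 : m₁ ≤ b - 1 ∧ -(b - 1) ≤ m₁ := by
    constructor <;> nlinarith [sq_nonneg m₂, sq_nonneg m₁]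
  have hm2 : m₂ ≤ b - 1 ∧ -(b - 1) ≤ m₂ := by
    constructor <;> nlinarith [sq_nonneg m₂, sq_nonneg m₁]
  have hdvd1 : b ∣ m₁ + m₂ := by
    have h1 : b ∣ m₁ + a * m₂ := dvd_trans ⟨b, by ring⟩ hdvd
    have h2 : m₁ + m₂ = (m₁ + a * m₂) - b * m₂ := by rw [hb]; ring
    rw [h2]
    exact dvd_sub h1 ⟨m₂, rfl⟩
  obtain ⟨t, ht⟩ := hdvd1
  have hdvd2 : b ∣ t + m₂ := by
    have h1 : m₁ + a * m₂ = b * (t + m₂) := by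
      have : m₁ + a * m₂ = (m₁ + m₂) + b * m₂ := by rw [hb]; ring
      rw [this, ht]; ring
    have h2 : b * b ∣ b * (t + m₂) := by rw [← h1, ← sq]; exact hdvd
    exact (mul_dvd_mul_iff_left (by omega : b ≠ 0)).mp h2
  obtain ⟨s, hs⟩ := hdvd2
  have htb1 : t ≤ 1 := by
    by_contra hc
    push_neg at hc
    have : b * 2 ≤ b * t := by
      apply mul_le_mul_of_nonneg_left (by omega) (by omega)
    omega
  have htb2 : -1 ≤ t := by
    by_contra hc
    push_neg at hc
    have : b * t ≤ b * (-2) := by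
      apply mul_le_mul_of_nonneg_left (by omega) (by omega)
    omega
  have hsb1 : s ≤ 1 := by
    by_contra hc
    push_neg at hc
    have : b * 2 ≤ b * s := by
      apply mul_le_mul_of_nonneg_left (by omega) (by omega)
    omega
  have hsb2 : -1 ≤ s := by
    by_contra hc
    push_neg at hc
    have : b * s ≤ b * (-2) := by
      apply mul_le_mul_of_nonneg_left (by omega) (by omega)
    omega
  interval_cases t <;> interval_cases s <;>
    simp only [mul_one, mul_zero, mul_neg] at ht hs <;>
    first
      | omega
      | (have hA : m₁ = 1 ∧ m₂ = b - 1 := by omega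
         nlinarith [hA.1, hA.2, hm])
      | (have hA : m₁ = -1 ∧ m₂ = -(b - 1) := by omega
         nlinarith [hA.1, hA.2, hm])

theorem stmt_3 (a : ℤ) (ha : 5 ≤ a) (N : ℤ) (hN : N = (a - 1) ^ 2) :
    ((sInf {n : ℕ | ∃ m₁ m₂ : ℤ, (m₁, m₂) ≠ (0, 0) ∧
        N ∣ m₁ + a * m₂ ∧ (n : ℤ) = m₁ ^ 2 + m₂ ^ 2} : ℕ) : ℤ) = 1 + (a - 2) ^ 2 := by
  subst hN
  set S := {n : ℕ | ∃ m₁ m₂ : ℤ, (m₁, m₂) ≠ (0, 0) ∧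
      (a - 1) ^ 2 ∣ m₁ + a * m₂ ∧ (n : ℤ) = m₁ ^ 2 + m₂ ^ 2} with hS
  have h0 : (0 : ℤ) ≤ 1 + (a - 2) ^ 2 := by positivity
  have hmem : (1 + (a - 2) ^ 2).toNat ∈ S := by
    refine ⟨1, a - 2, ?_, ⟨1, by ring⟩, ?_⟩
    · simp [Prod.ext_iff]
    · rw [Int.toNat_of_nonneg h0]; ring
  have hle : ∀ n ∈ S, (1 + (a - 2) ^ 2).toNat ≤ n := by
    rintro n ⟨m₁, m₂, hne, hdvd, hn⟩
    rw [Int.toNat_le, hn]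
    exact aux_stmt3 a ha m₁ m₂ hne hdvd
  have : sInf S = (1 + (a - 2) ^ 2).toNat :=
    le_antisymm (Nat.sInf_le hmem) (le_csInf ⟨_, hmem⟩ hle)
  rw [this, Int.toNat_of_nonneg h0]
end

section
/- Let s ≥ 2, a ≥ 2, and N = (a-1)^s. Then v_s(a,N)^2 ≤ a^2 + 1, where v_s(a,N)^2 is the minimum of m_1^2 + ... + m_s^2 over nonzero integer vectors with m_1 + a·m_2 + ... + a^{s-1}·m_s ≡ 0 (mod N). -/
theorem stmt_5 (s : ℕ) (hs : 2 ≤ s) (a : ℤ) (ha : 2 ≤ a) (N : ℤ) (hN : N = (a - 1) ^ s) :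
    ((sInf {n : ℕ | ∃ m : Fin s → ℤ, m ≠ 0 ∧
        N ∣ ∑ j : Fin s, a ^ (j : ℕ) * m j ∧ (n : ℤ) = ∑ j : Fin s, (m j) ^ 2} : ℕ) : ℤ) ≤
      a ^ 2 + 1 := by
  set i0 : Fin s := ⟨0, by omega⟩ with hi0
  set i1 : Fin s := ⟨1, by omega⟩ with hi1
  have hne : i0 ≠ i1 := by simp [hi0, hi1, Fin.ext_iff]
  set m : Fin s → ℤ := fun j => if j = i0 then -a else if j = i1 then 1 else 0 with hm
  have hmz : ∀ x : Fin s, x ∉ ({i0, i1} : Finset (Fin s)) → m x = 0 := by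
    intro x hx
    simp only [Finset.mem_insert, Finset.mem_singleton, not_or] at hx
    simp [hm, hx.1, hx.2]
  have hsum1 : ∑ j : Fin s, a ^ (j : ℕ) * m j = 0 := by
    rw [← Finset.sum_subset (Finset.subset_univ ({i0, i1} : Finset (Fin s)))
      (fun x _ hx => by rw [hmz x hx, mul_zero])]
    rw [Finset.sum_pair hne]
    simp [hm, hne, hne.symm, hi0, hi1]
  have hsum2 : ∑ j : Fin s, (m j) ^ 2 = a ^ 2 + 1 := by
    rw [← Finset.sum_subset (Finset.subset_univ ({i0, i1} : Finset (Fin s)))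
      (fun x _ hx => by rw [hmz x hx]; ring)]
    rw [Finset.sum_pair hne]
    simp [hm, hne, hne.symm]
  have hnn : (0:ℤ) ≤ a ^ 2 + 1 := by positivity
  have hmem : (a ^ 2 + 1).toNat ∈ {n : ℕ | ∃ m : Fin s → ℤ, m ≠ 0 ∧
      N ∣ ∑ j : Fin s, a ^ (j : ℕ) * m j ∧ (n : ℤ) = ∑ j : Fin s, (m j) ^ 2} := by
    refine ⟨m, ?_, ?_, ?_⟩
    · intro h
      have : m i1 = 0 := by rw [h]; rfl
      simp [hm, hne.symm] at this
    · rw [hsum1]; exact dvd_zero N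
    · rw [hsum2, Int.toNat_of_nonneg hnn]
  have := Nat.sInf_le hmem
  calc ((sInf {n : ℕ | ∃ m : Fin s → ℤ, m ≠ 0 ∧
        N ∣ ∑ j : Fin s, a ^ (j : ℕ) * m j ∧ (n : ℤ) = ∑ j : Fin s, (m j) ^ 2} : ℕ) : ℤ)
      ≤ ((a ^ 2 + 1).toNat : ℤ) := by exact_mod_cast this
    _ = a ^ 2 + 1 := Int.toNat_of_nonneg hnn
end

section
/- Let τ ≥ 2, λ ≥ 1, and a ≥ 2 be integers such that λ divides (a-1)^τ, and set N = (a-1)^τ / λ. Then for every integer s with 2 ≤ τ < s, the spectral value satisfies v_s(a,N)^2 ≤ Σ_{k=0}^{τ} binom(τ,k)^2. -/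
theorem stmt_7 (τ s : ℕ) (hτ : 2 ≤ τ) (hτs : τ < s) (a lam : ℤ) (ha : 2 ≤ a)
    (hlam : 1 ≤ lam) (hdvd : lam ∣ (a - 1) ^ τ) (N : ℤ) (hN : N = (a - 1) ^ τ / lam) :
    ((sInf {n : ℕ | ∃ m : Fin s → ℤ, m ≠ 0 ∧
        N ∣ ∑ j : Fin s, a ^ (j : ℕ) * m j ∧ (n : ℤ) = ∑ j : Fin s, (m j) ^ 2} : ℕ) : ℤ) ≤
      ∑ k ∈ Finset.range (τ + 1), (Nat.choose τ k : ℤ) ^ 2 := by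
  set n : ℕ := ∑ k ∈ Finset.range (τ + 1), (Nat.choose τ k) ^ 2 with hn
  have key : sInf {n : ℕ | ∃ m : Fin s → ℤ, m ≠ 0 ∧
      N ∣ ∑ j : Fin s, a ^ (j : ℕ) * m j ∧ (n : ℤ) = ∑ j : Fin s, (m j) ^ 2} ≤ n := by
    apply Nat.sInf_le
    refine ⟨fun j => if (j : ℕ) ≤ τ then (-1) ^ (j : ℕ) * (Nat.choose τ j : ℤ) else 0, ?_, ?_, ?_⟩
    · intro h
      have h0 : (0 : ℕ) < s := by omega
      have := congrFun h ⟨0, h0⟩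
      simp at this
    · -- divisibility
      have hNdvd : N ∣ (a - 1) ^ τ := by
        refine ⟨lam, ?_⟩
        rw [hN, Int.ediv_mul_cancel hdvd]
      have hsum : (∑ j : Fin s, a ^ (j : ℕ) *
          (if (j : ℕ) ≤ τ then (-1) ^ (j : ℕ) * (Nat.choose τ j : ℤ) else 0))
          = (1 - a) ^ τ := by
        rw [Fin.sum_univ_eq_sum_range
          (fun j => a ^ j * (if j ≤ τ then (-1) ^ j * (Nat.choose τ j : ℤ) else 0)) s]
        rw [← Finset.sum_subset (Finset.range_subset_range.2 (by omega : τ + 1 ≤ s))]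
        · rw [sub_eq_add_neg, add_comm (1 : ℤ) (-a), add_pow]
          refine Finset.sum_congr rfl fun k hk => ?_
          have hk' : k ≤ τ := Nat.lt_succ_iff.mp (Finset.mem_range.mp hk)
          rw [if_pos hk', one_pow, neg_pow]
          ring
        · intro k _ hk
          have : ¬ k ≤ τ := by simp at hk; omega
          simp [this]
      rw [hsum]
      have : (1 - a) ^ τ = (-1) ^ τ * (a - 1) ^ τ := by
        rw [← neg_pow]; ring_nf
      rw [this]
      exact Dvd.dvd.mul_left hNdvd _
    · rw [Fin.sum_univ_eq_sum_range
        (fun j => (if j ≤ τ then (-1) ^ j * (Nat.choose τ j : ℤ) else 0) ^ 2) s]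
      rw [← Finset.sum_subset (Finset.range_subset_range.2 (by omega : τ + 1 ≤ s))]
      · push_cast [hn]
        refine Finset.sum_congr rfl fun k hk => ?_
        have hk' : k ≤ τ := Nat.lt_succ_iff.mp (Finset.mem_range.mp hk)
        simp [hk', mul_pow, ← pow_mul]
      · intro k _ hk
        have : ¬ k ≤ τ := by simp at hk; omega
        simp [this]
  calc ((sInf _ : ℕ) : ℤ) ≤ (n : ℤ) := by exact_mod_cast key
    _ = _ := by push_cast [hn]; rfl
end

section
/- Let a ≥ 5 and N = (a-1)^2. Suppose (m_1, m_2) is a nonzero integer solution of m_1 + a·m_2 ≡ 0 (mod N) with m_1^2 + m_2^2 < 1 + (a-2)^2. Derive a contradiction; i.e., every nonzero solution satisfies m_1^2 + m_2^2 ≥ 1 + (a-2)^2. -/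
theorem stmt_11 (a : ℤ) (ha : 5 ≤ a) (N : ℤ) (hN : N = (a - 1) ^ 2)
    (m₁ m₂ : ℤ) (hne : (m₁, m₂) ≠ (0, 0)) (hsol : N ∣ m₁ + a * m₂) :
    1 + (a - 2) ^ 2 ≤ m₁ ^ 2 + m₂ ^ 2 := by
  by_contra hlt
  push_neg at hlt
  subst hN
  obtain ⟨k, hk⟩ := hsol
  -- bounds on m₁, m₂
  have h1 : m₁ ^ 2 ≤ (a - 2) ^ 2 := by nlinarith [sq_nonneg m₂]
  have h2 : m₂ ^ 2 ≤ (a - 2) ^ 2 := by nlinarith [sq_nonneg m₁]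
  have hb1 : -(a - 2) ≤ m₁ ∧ m₁ ≤ a - 2 := by
    constructor <;> nlinarith [sq_nonneg (m₁ + (a - 2)), sq_nonneg (m₁ - (a - 2))]
  have hb2 : -(a - 2) ≤ m₂ ∧ m₂ ≤ a - 2 := by
    constructor <;> nlinarith [sq_nonneg (m₂ + (a - 2)), sq_nonneg (m₂ - (a - 2))]
  have hk1 : k ≤ 1 := by
    by_contra hc
    push_neg at hc
    have : (a - 1) ^ 2 * 2 ≤ (a - 1) ^ 2 * k :=
      mul_le_mul_of_nonneg_left (by linarith) (sq_nonneg _)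
    nlinarith [hb1.2, hb2.2]
  have hk2 : -1 ≤ k := by
    by_contra hc
    push_neg at hc
    have : (a - 1) ^ 2 * k ≤ (a - 1) ^ 2 * (-2) :=
      mul_le_mul_of_nonneg_left (by linarith) (sq_nonneg _)
    nlinarith [hb1.1, hb2.1]
  interval_cases k
  all_goals clear h1 h2 hb1 hb2
  · -- k = -1 : m₁ + a m₂ = -(a-1)^2
    have hm1 : m₁ = -1 - a * (m₂ + (a - 2)) := by linear_combination hk
    have e2 : m₁ ^ 2 + m₂ ^ 2 =
        1 + (a - 2) ^ 2 + (a ^ 2 + 1) * (m₂ + (a - 2)) ^ 2 + 4 * (m₂ + (a - 2)) := by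
      rw [hm1]; ring
    rcases eq_or_ne (m₂ + (a - 2)) 0 with hd | hd
    · rw [hd] at e2; simp at e2; linarith
    · have hd2 : 1 ≤ (m₂ + (a - 2)) ^ 2 := by
        have h := sq_pos_of_ne_zero hd
        linarith [Int.add_one_le_iff.mpr h]
      have h26 : (26 : ℤ) ≤ a ^ 2 + 1 := by nlinarith
      have h3 : 26 * (m₂ + (a - 2)) ^ 2 ≤ (a ^ 2 + 1) * (m₂ + (a - 2)) ^ 2 :=
        mul_le_mul_of_nonneg_right h26 (sq_nonneg _)
      nlinarith [sq_nonneg (m₂ + (a - 2) + 1)]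
  · -- k = 0 : m₁ = -a m₂
    have hm1 : m₁ = -(a * m₂) := by linear_combination hk
    have e2 : m₁ ^ 2 + m₂ ^ 2 = (a ^ 2 + 1) * m₂ ^ 2 := by rw [hm1]; ring
    rcases eq_or_ne m₂ 0 with h0 | h0
    · have : m₁ = 0 := by rw [hm1, h0]; ring
      exact hne (by simp [this, h0])
    · have hd2 : 1 ≤ m₂ ^ 2 := by
        have h := sq_pos_of_ne_zero h0
        linarith [Int.add_one_le_iff.mpr h]
      have h3 : a ^ 2 + 1 ≤ (a ^ 2 + 1) * m₂ ^ 2 :=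
        le_mul_of_one_le_right (by positivity) hd2
      nlinarith
  · -- k = 1 : m₁ + a m₂ = (a-1)^2
    have hm1 : m₁ = 1 - a * (m₂ - (a - 2)) := by linear_combination hk
    have e2 : m₁ ^ 2 + m₂ ^ 2 =
        1 + (a - 2) ^ 2 + (a ^ 2 + 1) * (m₂ - (a - 2)) ^ 2 - 4 * (m₂ - (a - 2)) := by
      rw [hm1]; ring
    rcases eq_or_ne (m₂ - (a - 2)) 0 with hd | hd
    · rw [hd] at e2; simp at e2; linarith
    · have hd2 : 1 ≤ (m₂ - (a - 2)) ^ 2 := by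
        have h := sq_pos_of_ne_zero hd
        linarith [Int.add_one_le_iff.mpr h]
      have h26 : (26 : ℤ) ≤ a ^ 2 + 1 := by nlinarith
      have h3 : 26 * (m₂ - (a - 2)) ^ 2 ≤ (a ^ 2 + 1) * (m₂ - (a - 2)) ^ 2 :=
        mul_le_mul_of_nonneg_right h26 (sq_nonneg _)
      nlinarith [sq_nonneg (m₂ - (a - 2) - 1)]
end

section
/- Let s ≥ 2, a ≥ b_s + 1, and N = (a-1)^s, where b_s is the largest absolute value of a negative coefficient in the expansion of (a-1)^s in powers of a, i.e., b_s = max_{1 ≤ k ≤ s, k odd} binom(s,k). Then every nonzero integer solution (m_1,...,m_s) of m_1 + a·m_2 + ... + a^{s-1}·m_s ≡ 0 (mod N) satisfies sqrt(m_1^2 + ... + m_s^2) ≥ a - b_s. -/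
lemma digits_aux (a : ℤ) (ha : 0 < a) :
    ∀ n (f : ℕ → ℤ), (∀ j, |f j| < a) → (∑ j ∈ Finset.range n, a ^ j * f j) = 0 →
      ∀ j < n, f j = 0 := by
  intro n
  induction n with
  | zero => intro f _ _ j hj; omega
  | succ n ih =>
    intro f hf hsum j hj
    rw [Finset.sum_range_succ'] at hsum
    have hrw : ∑ i ∈ Finset.range n, a ^ (i + 1) * f (i + 1)
        = a * ∑ i ∈ Finset.range n, a ^ i * f (i + 1) := by
      rw [Finset.mul_sum]
      exact Finset.sum_congr rfl fun i _ => by ring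
    rw [hrw, pow_zero, one_mul] at hsum
    set T := ∑ i ∈ Finset.range n, a ^ i * f (i + 1) with hT
    have hT0 : T = 0 := by
      by_contra h
      have h1 : 1 ≤ |T| := Int.one_le_abs (by omega)
      have h2 : |f 0| = |a| * |T| := by
        have : f 0 = -(a * T) := by linarith
        rw [this, abs_neg, abs_mul]
      have h3 : |a| = a := abs_of_pos ha
      have := hf 0
      nlinarith
    have hf0 : f 0 = 0 := by rw [hT0] at hsum; linarith
    rcases j with _ | j
    · exact hf0
    · exact ih (fun i => f (i + 1)) (fun i => hf (i + 1)) hT0 j (by omega)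

theorem stmt_12 (s : ℕ) (hs : 2 ≤ s)
    (b : ℕ) (hb : b = ((Finset.Icc 1 s).filter (fun k => Odd k)).sup (Nat.choose s))
    (a : ℤ) (ha : (b : ℤ) + 1 ≤ a) (N : ℤ) (hN : N = (a - 1) ^ s)
    (m : Fin s → ℤ) (hne : m ≠ 0) (hsol : N ∣ ∑ j : Fin s, a ^ (j : ℕ) * m j) :
    ((a : ℝ) - (b : ℝ)) ≤ Real.sqrt (∑ j : Fin s, ((m j : ℝ)) ^ 2) := by
  by_contra hlt
  push_neg at hlt
  -- b ≥ s ≥ 2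
  have hbs : s ≤ b := by
    have hmem : 1 ∈ (Finset.Icc 1 s).filter (fun k => Odd k) := by
      simp [Finset.mem_filter, Finset.mem_Icc]
      omega
    have := Finset.le_sup (f := Nat.choose s) hmem
    rw [Nat.choose_one_right] at this
    omega
  have hb2 : (2 : ℤ) ≤ (b : ℤ) := by exact_mod_cast le_trans hs hbs
  have ha3 : (3 : ℤ) ≤ a := by omega
  -- the real-side bound gives per-coordinate bounds
  have habr : (0 : ℝ) < (a : ℝ) - (b : ℝ) := by
    have : ((b : ℤ) : ℝ) + 1 ≤ (a : ℝ) := by exact_mod_cast ha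
    push_cast at this ⊢
    linarith
  have hsq : (∑ j : Fin s, ((m j : ℝ)) ^ 2) < ((a : ℝ) - (b : ℝ)) ^ 2 := by
    have hnn : (0 : ℝ) ≤ ∑ j : Fin s, ((m j : ℝ)) ^ 2 :=
      Finset.sum_nonneg fun j _ => sq_nonneg _
    have := Real.sq_sqrt hnn
    nlinarith [Real.sqrt_nonneg (∑ j : Fin s, ((m j : ℝ)) ^ 2)]
  have hcoord : ∀ j : Fin s, |m j| ≤ a - (b : ℤ) - 1 := by
    intro j
    have h1 : ((m j : ℝ)) ^ 2 ≤ ∑ i : Fin s, ((m i : ℝ)) ^ 2 :=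
      Finset.single_le_sum (f := fun i : Fin s => ((m i : ℝ)) ^ 2)
        (fun i _ => sq_nonneg _) (Finset.mem_univ j)
    have h2 : ((m j : ℝ)) ^ 2 < ((a : ℝ) - (b : ℝ)) ^ 2 := lt_of_le_of_lt h1 hsq
    have h3 : (m j) ^ 2 < (a - (b : ℤ)) ^ 2 := by exact_mod_cast (by push_cast at h2 ⊢; linarith : ((m j : ℝ)) ^ 2 < ((a - (b:ℤ) : ℤ) : ℝ) ^ 2)
    have h4 : |m j| < a - (b : ℤ) := by
      nlinarith [sq_abs (m j), abs_nonneg (m j)]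
    omega
  -- rewrite the sum over range s
  set g : ℕ → ℤ := fun j => if h : j < s then m ⟨j, h⟩ else 0 with hg
  have hgs : ∑ j : Fin s, a ^ (j : ℕ) * m j = ∑ j ∈ Finset.range s, a ^ j * g j := by
    rw [← Fin.sum_univ_eq_sum_range (fun j => a ^ j * g j) s]
    exact Finset.sum_congr rfl fun i _ => by simp [hg, i.isLt]
  set S := ∑ j ∈ Finset.range s, a ^ j * g j with hS
  rw [hgs] at hsol
  set G := ∑ j ∈ Finset.range s, a ^ j with hG
  have hG1 : 1 ≤ G := by
    rw [hG]
    have h0 : (0 : ℕ) ∈ Finset.range s := by simp; omega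
    calc (1 : ℤ) = a ^ 0 := (pow_zero a).symm
      _ ≤ ∑ j ∈ Finset.range s, a ^ j :=
        Finset.single_le_sum (f := fun j => a ^ j) (fun i _ => by positivity) h0
  have hgeom : G * (a - 1) = a ^ s - 1 := by
    rw [hG]; exact geom_sum_mul a s
  -- bound |S|
  have hSbound : |S| ≤ (a - (b : ℤ) - 1) * G := by
    rw [hS, hG, Finset.mul_sum]
    refine le_trans (Finset.abs_sum_le_sum_abs _ _) (Finset.sum_le_sum ?_)
    intro i hi
    rw [abs_mul, abs_pow, abs_of_pos (by omega : (0:ℤ) < a)]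
    have hgi : |g i| ≤ a - (b : ℤ) - 1 := by
      rw [hg]; dsimp only
      split
      · exact hcoord _
      · simp; omega
    have : (0:ℤ) ≤ a ^ i := by positivity
    calc a ^ i * |g i| ≤ a ^ i * (a - (b:ℤ) - 1) := by
          exact mul_le_mul_of_nonneg_left hgi this
      _ = (a - (b:ℤ) - 1) * a ^ i := by ring
  -- key inequality: (a-1)^s ≥ a^s - b*G
  have hstar : a ^ s - (b : ℤ) * G ≤ (a - 1) ^ s := by
    have hexp : (a - 1) ^ s = ∑ k ∈ Finset.range (s + 1),
        a ^ k * (-1 : ℤ) ^ (s - k) * (s.choose k : ℤ) := by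
      have := add_pow a (-1 : ℤ) s
      simpa [← sub_eq_add_neg] using this
    rw [hexp, Finset.sum_range_succ]
    simp only [Nat.sub_self, pow_zero, mul_one, Nat.choose_self, Nat.cast_one]
    have hterm : ∀ k ∈ Finset.range s,
        -((b : ℤ) * a ^ k) ≤ a ^ k * (-1 : ℤ) ^ (s - k) * (s.choose k : ℤ) := by
      intro k hk
      rw [Finset.mem_range] at hk
      have hak : (0:ℤ) < a ^ k := by positivity
      rcases Nat.even_or_odd (s - k) with he | ho
      · rw [he.neg_one_pow]
        have : (0:ℤ) ≤ a ^ k * 1 * (s.choose k : ℤ) := by positivity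
        nlinarith
      · rw [ho.neg_one_pow]
        have hck : (s.choose k : ℤ) ≤ (b : ℤ) := by
          have hmem : s - k ∈ (Finset.Icc 1 s).filter (fun k => Odd k) := by
            simp [Finset.mem_filter, Finset.mem_Icc]
            exact ⟨by omega, ho⟩
          have h1 := Finset.le_sup (f := Nat.choose s) hmem
          rw [← hb] at h1
          have h2' : s.choose (s - k) = s.choose k := by
            rw [Nat.choose_symm (by omega : k ≤ s)]
          rw [h2'] at h1
          exact_mod_cast h1
        nlinarith
    have hsum := Finset.sum_le_sum hterm
    have : ∑ k ∈ Finset.range s, -((b : ℤ) * a ^ k) = -((b:ℤ) * G) := by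
      rw [hG, Finset.mul_sum, ← Finset.sum_neg_distrib]
    rw [this] at hsum
    linarith
  -- hence |S| < N
  have hkey : (a - (b : ℤ) - 1) * G < (a - 1) ^ s := by
    nlinarith
  have hSN : |S| < N := by rw [hN]; exact lt_of_le_of_lt hSbound hkey
  have hS0 : S = 0 := by
    by_contra h
    have hpos : 0 < |S| := abs_pos.mpr h
    have := Int.le_of_dvd hpos ((dvd_abs N S).mpr hsol)
    omega
  -- digits are zero
  have hz := digits_aux a (by omega) s g
    (fun j => by
      by_cases h : j < s
      · have h1 : g j = m ⟨j, h⟩ := by rw [hg]; simp [h]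
        rw [h1]; have := hcoord ⟨j, h⟩; omega
      · have h1 : g j = 0 := by rw [hg]; simp [h]
        rw [h1]; simp; omega)
    hS0
  apply hne
  funext j
  have := hz j j.isLt
  rw [hg] at this
  simpa [j.isLt] using this
end

section
/- Let a ≥ 2, τ ≥ 2, λ ≥ 1 be integers with λ | (a-1)^τ, and N = (a-1)^τ/λ with N > a. For 2 ≤ s < τ with λ ≤ (a-1)^{τ-s}, the vector witnessing the upper bound in Theorem 6 exists: there is a nonzero integer vector (m_1,...,m_s) with N | m_1 + a·m_2 + ... + a^{s-1}·m_s and m_1^2 + ... + m_s^2 ≤ a^2 + 1. -/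
theorem stmt_16 (a lam : ℤ) (τ s : ℕ) (ha : 2 ≤ a) (hτ : 2 ≤ τ) (hlam : 1 ≤ lam)
    (hdvd : lam ∣ (a - 1) ^ τ) (N : ℤ) (hN : N = (a - 1) ^ τ / lam) (hNa : a < N)
    (hs : 2 ≤ s) (hsτ : s < τ) (hlam2 : lam ≤ (a - 1) ^ (τ - s)) :
    ∃ m : Fin s → ℤ, m ≠ 0 ∧ N ∣ ∑ j : Fin s, a ^ (j : ℕ) * m j ∧
      ∑ j : Fin s, (m j) ^ 2 ≤ a ^ 2 + 1 := by
  refine ⟨fun j => if (j : ℕ) = 0 then a else if (j : ℕ) = 1 then -1 else 0, ?_, ?_, ?_⟩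
  · intro h
    have h0 : (0 : ℕ) < s := by omega
    have := congrFun h ⟨0, h0⟩
    simp at this
    omega
  · have key : ∀ (f : ℕ → ℤ), ∑ j : Fin s, f (j : ℕ) *
        (if (j : ℕ) = 0 then a else if (j : ℕ) = 1 then -1 else 0) =
        f 0 * a + f 1 * (-1) := by
      intro f
      rw [Fin.sum_univ_eq_sum_range (fun j => f j * (if j = 0 then a else if j = 1 then -1 else 0))]
      rw [← Finset.sum_subset (Finset.range_subset_range.mpr hs)]
      · rw [Finset.sum_range_succ, Finset.sum_range_succ]; norm_num
      · intro x _ hx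
        simp only [Finset.mem_range] at hx
        have : x ≠ 0 ∧ x ≠ 1 := by omega
        simp [this.1, this.2]
    have := key (fun j => a ^ j)
    simp only [pow_zero, pow_one] at this
    rw [this]
    simp
  · have key : ∑ j : Fin s, (if (j : ℕ) = 0 then a else if (j : ℕ) = 1 then -1 else (0:ℤ)) ^ 2 =
        a ^ 2 + 1 := by
      rw [Fin.sum_univ_eq_sum_range (fun j => (if j = 0 then a else if j = 1 then -1 else (0:ℤ)) ^ 2)]
      rw [← Finset.sum_subset (Finset.range_subset_range.mpr hs)]
      · rw [Finset.sum_range_succ, Finset.sum_range_succ]; norm_num [add_comm]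
      · intro x _ hx
        simp only [Finset.mem_range] at hx
        have : x ≠ 0 ∧ x ≠ 1 := by omega
        simp [this.1, this.2]
    rw [key]
end
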